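/- (Fixed-switch interpolation identity.) Under the support assumption, for any fixed time z with 1 ≤ z ≤ L, J(π_e) = E_{τ∼p_{π_b}}[Σ_{t=1}^{z} γ^{t−1} ρ_{1:t} R_t + Σ_{t=z+1}^{L} γ^{t−1} (d_z^{π_e}(S_z,A_z)/d_z^{π_b}(S_z,A_z)) ρ_{z+1:t} R_t], where the ratio is well defined p_{π_b}-almost surely. -/

import Mathlib

open Finset

variable {S A : Type*} [Fintype S] [Fintype A] [DecidableEq S] [DecidableEq A]
  [Inhabited S] [Inhabited A]

/-- Weight contributed by the `t`-th step of trajectory `τ` under initial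
distribution `d1`, transition kernel `T` and policy `π` (`π s a = π(a|s)`,
`T s a s' = T(s'|s,a)`). -/
noncomputable def stepW (d1 : S → ℝ) (T : S → A → S → ℝ) (π : S → A → ℝ)
    (τ : ℕ → S × A) : ℕ → ℝ
  | 0 => d1 (τ 0).1 * π (τ 0).1 (τ 0).2
  | t + 1 => T (τ t).1 (τ t).2 (τ (t + 1)).1 * π (τ (t + 1)).1 (τ (t + 1)).2

/-- Probability under `p_π` of the first `n` steps (times `0, …, n-1`) of `τ`. -/
noncomputable def preP (d1 : S → ℝ) (T : S → A → S → ℝ) (π : S → A → ℝ)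
    (n : ℕ) (τ : ℕ → S × A) : ℝ :=
  ∏ t ∈ range n, stepW d1 T π τ t

/-- Extension of a length-`n` prefix to an infinite trajectory. -/
def extTraj {n : ℕ} (σ : Fin n → S × A) : ℕ → S × A :=
  fun t => if h : t < n then σ ⟨t, h⟩ else default

/-- Expectation under `p_π` of a function depending only on the first `n` steps
of the trajectory. -/
noncomputable def expVal (d1 : S → ℝ) (T : S → A → S → ℝ) (π : S → A → ℝ)
    (n : ℕ) (f : (ℕ → S × A) → ℝ) : ℝ :=
  ∑ σ : Fin n → S × A, preP d1 T π n (extTraj σ) * f (extTraj σ)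

/-- `d_t^π(s,a)`, the time-`t` state-action distribution (time is 0-indexed,
so `t = 0` is the paper's time `1`). -/
noncomputable def dSA (d1 : S → ℝ) (T : S → A → S → ℝ) (π : S → A → ℝ)
    (t : ℕ) (s : S) (a : A) : ℝ :=
  expVal d1 T π (t + 1) (fun τ => if τ t = (s, a) then 1 else 0)

/-- Single-step likelihood ratio `ρ_t = π_e(A_t|S_t)/π_b(A_t|S_t)`
(0-indexed time). -/
noncomputable def rho (πb πe : S → A → ℝ) (τ : ℕ → S × A) (t : ℕ) : ℝ :=
  πe (τ t).1 (τ t).2 / πb (τ t).1 (τ t).2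

/-- Conditional expectation under `p_π` given `(S_t, A_t) = (s, a)`, for a
function of the first `n` steps. -/
noncomputable def condExpSA (d1 : S → ℝ) (T : S → A → S → ℝ) (π : S → A → ℝ)
    (n t : ℕ) (s : S) (a : A) (f : (ℕ → S × A) → ℝ) : ℝ :=
  expVal d1 T π n (fun τ => if τ t = (s, a) then f τ else 0) / dSA d1 T π t s a

/-- Averaged state-action distribution `d_{1:Th}^π` over the first `Th` steps
with discount `γ`. -/
noncomputable def dAvg (d1 : S → ℝ) (T : S → A → S → ℝ) (π : S → A → ℝ)
    (γ : ℝ) (Th : ℕ) (s : S) (a : A) : ℝ :=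
  (∑ t ∈ range Th, γ ^ t * dSA d1 T π t s a) / (∑ t ∈ range Th, γ ^ t)

/-- Discounted average state-action occupancy `d^π` (infinite horizon),
`d^π(s,a) = (1-γ) Σ_{t≥1} γ^{t-1} d_t^π(s,a)`. -/
noncomputable def dInf (d1 : S → ℝ) (T : S → A → S → ℝ) (π : S → A → ℝ)
    (γ : ℝ) (s : S) (a : A) : ℝ :=
  (1 - γ) * ∑' t : ℕ, γ ^ t * dSA d1 T π t s a

/-- Infinite-horizon value `J(π) = E_{p_π}[Σ_{t≥1} γ^{t-1} R_t]`. -/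
noncomputable def Jinf (d1 : S → ℝ) (T : S → A → S → ℝ) (π : S → A → ℝ)
    (r : S → A → ℝ) (γ : ℝ) : ℝ :=
  ∑' t : ℕ, γ ^ t * expVal d1 T π (t + 1) (fun τ => r (τ t).1 (τ t).2)

/-- Doubly-robust weight `w(m, n)` of the paper (`m` is the paper's 1-indexed
time, with `w(0, n) = 1`). -/
noncomputable def wDR (d1 : S → ℝ) (T : S → A → S → ℝ) (πb πe : S → A → ℝ)
    (γ : ℝ) (n : ℕ) (τ : ℕ → S × A) (m : ℕ) : ℝ :=
  if m = 0 then 1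
  else if m ≤ n then ∏ j ∈ range m, rho πb πe τ j
  else (dInf d1 T πe γ (τ (m - n - 1)).1 (τ (m - n - 1)).2 /
        dInf d1 T πb γ (τ (m - n - 1)).1 (τ (m - n - 1)).2) *
      ∏ j ∈ Icc (m - n) (m - 1), rho πb πe τ j

section Aux

variable (d1 : S → ℝ) (T : S → A → S → ℝ) (π πb πe : S → A → ℝ)

lemma stepW_congr {τ τ' : ℕ → S × A} {t : ℕ} (h : ∀ j, j ≤ t → τ j = τ' j) :
    stepW d1 T π τ t = stepW d1 T π τ' t := by
  cases t with
  | zero => simp [stepW, h 0 le_rfl]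
  | succ t => simp [stepW, h t (Nat.le_succ t), h (t + 1) le_rfl]

lemma preP_congr {τ τ' : ℕ → S × A} {n : ℕ} (h : ∀ j, j < n → τ j = τ' j) :
    preP d1 T π n τ = preP d1 T π n τ' := by
  unfold preP
  refine Finset.prod_congr rfl fun t ht => ?_
  exact stepW_congr d1 T π fun j hj => h j (lt_of_le_of_lt hj (mem_range.mp ht))

lemma extTraj_lt {n : ℕ} (σ : Fin n → S × A) {t : ℕ} (h : t < n) :
    extTraj σ t = σ ⟨t, h⟩ := dif_pos h

lemma extTraj_snoc_lt {n : ℕ} (σ : Fin n → S × A) (p : S × A) {t : ℕ} (h : t < n) :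
    extTraj (Fin.snoc σ p) t = extTraj σ t := by
  rw [extTraj_lt _ h, extTraj_lt (Fin.snoc σ p) (Nat.lt_succ_of_lt h)]
  have : (⟨t, Nat.lt_succ_of_lt h⟩ : Fin (n + 1)) = Fin.castSucc ⟨t, h⟩ := rfl
  rw [this, Fin.snoc_castSucc]

lemma extTraj_snoc_last {n : ℕ} (σ : Fin n → S × A) (p : S × A) :
    extTraj (Fin.snoc σ p) n = p := by
  rw [extTraj_lt (Fin.snoc σ p) (Nat.lt_succ_self n)]
  have : (⟨n, Nat.lt_succ_self n⟩ : Fin (n + 1)) = Fin.last n := rfl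
  rw [this, Fin.snoc_last]

lemma expVal_succ (n : ℕ) (f : (ℕ → S × A) → ℝ) :
    expVal d1 T π (n + 1) f =
      ∑ σ : Fin n → S × A, ∑ p : S × A,
        preP d1 T π n (extTraj σ) * stepW d1 T π (extTraj (Fin.snoc σ p)) n
          * f (extTraj (Fin.snoc σ p)) := by
  unfold expVal
  rw [show (∑ σ : Fin (n+1) → S × A, preP d1 T π (n+1) (extTraj σ) * f (extTraj σ))
      = ∑ x : (S × A) × (Fin n → S × A),
          preP d1 T π (n+1) (extTraj (Fin.snoc x.2 x.1)) * f (extTraj (Fin.snoc x.2 x.1))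
    from (Fintype.sum_equiv (Fin.snocEquiv (fun _ => S × A)) _ _ (fun x => rfl)).symm]
  rw [Fintype.sum_prod_type, Finset.sum_comm]
  refine Finset.sum_congr rfl fun σ _ => Finset.sum_congr rfl fun p _ => ?_
  have h1 : preP d1 T π (n + 1) (extTraj (Fin.snoc σ p))
      = preP d1 T π n (extTraj σ) * stepW d1 T π (extTraj (Fin.snoc σ p)) n := by
    unfold preP
    rw [Finset.prod_range_succ]
    congr 1
    exact preP_congr d1 T π (fun j hj => extTraj_snoc_lt σ p hj)
  rw [h1]

lemma expVal_congr {n : ℕ} {f g : (ℕ → S × A) → ℝ} (h : ∀ τ, f τ = g τ) :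
    expVal d1 T π n f = expVal d1 T π n g := by
  unfold expVal
  exact Finset.sum_congr rfl fun σ _ => by rw [h]

lemma expVal_const_mul (n : ℕ) (c : ℝ) (f : (ℕ → S × A) → ℝ) :
    expVal d1 T π n (fun τ => c * f τ) = c * expVal d1 T π n f := by
  unfold expVal
  rw [Finset.mul_sum]
  exact Finset.sum_congr rfl fun σ _ => by ring

lemma expVal_finsum {n : ℕ} {ι : Type*} (F : Finset ι) (g : ι → (ℕ → S × A) → ℝ) :
    expVal d1 T π n (fun τ => ∑ t ∈ F, g t τ) = ∑ t ∈ F, expVal d1 T π n (g t) := by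
  unfold expVal
  rw [Finset.sum_comm]
  exact Finset.sum_congr rfl fun σ _ => by rw [Finset.mul_sum]

lemma expVal_add {n : ℕ} (f g : (ℕ → S × A) → ℝ) :
    expVal d1 T π n (fun τ => f τ + g τ) = expVal d1 T π n f + expVal d1 T π n g := by
  unfold expVal
  rw [← Finset.sum_add_distrib]
  exact Finset.sum_congr rfl fun σ _ => by ring

lemma sum_stepW_last (hTsum : ∀ s a, ∑ s', T s a s' = 1) (hπsum : ∀ s, ∑ a, π s a = 1)
    {n : ℕ} (σ : Fin (n + 1) → S × A) :
    ∑ p : S × A, stepW d1 T π (extTraj (Fin.snoc σ p)) (n + 1) = 1 := by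
  have hst : ∀ p : S × A, stepW d1 T π (extTraj (Fin.snoc σ p)) (n + 1)
      = T (extTraj σ n).1 (extTraj σ n).2 p.1 * π p.1 p.2 := by
    intro p
    show T (extTraj (Fin.snoc σ p) n).1 (extTraj (Fin.snoc σ p) n).2
        (extTraj (Fin.snoc σ p) (n+1)).1 * π (extTraj (Fin.snoc σ p) (n+1)).1
        (extTraj (Fin.snoc σ p) (n+1)).2 = _
    rw [extTraj_snoc_lt σ p (Nat.lt_succ_self n), extTraj_snoc_last]
  simp only [hst]
  rw [Fintype.sum_prod_type]
  have : ∀ x : S, ∑ y : A, T (extTraj σ n).1 (extTraj σ n).2 x * π x y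
      = T (extTraj σ n).1 (extTraj σ n).2 x := by
    intro x; rw [← Finset.mul_sum, hπsum, mul_one]
  simp only [this]
  exact hTsum _ _

/-- Marginalization: a function of the first `m` coordinates has the same
expectation at any horizon `n ≥ m` (for `m ≥ 1`). -/
lemma expVal_marginal (hTsum : ∀ s a, ∑ s', T s a s' = 1) (hπsum : ∀ s, ∑ a, π s a = 1)
    {m : ℕ} (hm : 1 ≤ m) (f : (ℕ → S × A) → ℝ)
    (hf : ∀ τ τ' : ℕ → S × A, (∀ j, j < m → τ j = τ' j) → f τ = f τ') :
    ∀ n, m ≤ n → expVal d1 T π n f = expVal d1 T π m f := by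
  intro n hn
  induction n with
  | zero => omega
  | succ n ih =>
    rcases Nat.lt_or_ge m (n+1) with hlt | hge
    · have hmn : m ≤ n := by omega
      obtain ⟨n', rfl⟩ : ∃ n', n = n' + 1 := ⟨n - 1, by omega⟩
      rw [expVal_succ, ← ih hmn]
      unfold expVal
      refine Finset.sum_congr rfl fun σ _ => ?_
      have hfs : ∀ p : S × A, f (extTraj (Fin.snoc σ p)) = f (extTraj σ) := by
        intro p
        exact hf _ _ fun j hj => extTraj_snoc_lt σ p (by omega)
      calc ∑ p : S × A, preP d1 T π (n'+1) (extTraj σ)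
              * stepW d1 T π (extTraj (Fin.snoc σ p)) (n'+1) * f (extTraj (Fin.snoc σ p))
          = preP d1 T π (n'+1) (extTraj σ) * f (extTraj σ)
              * ∑ p : S × A, stepW d1 T π (extTraj (Fin.snoc σ p)) (n'+1) := by
            rw [Finset.mul_sum]
            exact Finset.sum_congr rfl fun p _ => by rw [hfs p]; ring
        _ = preP d1 T π (n'+1) (extTraj σ) * f (extTraj σ) := by
            rw [sum_stepW_last d1 T π hTsum hπsum σ, mul_one]
    · have : m = n + 1 := by omega
      subst this; rfl

lemma pb_mul_rho_fst (hπe0 : ∀ s a, 0 ≤ πe s a) (hsupp : ∀ s a, 0 < πe s a → 0 < πb s a)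
    (p : S × A) : πb p.1 p.2 * (πe p.1 p.2 / πb p.1 p.2) = πe p.1 p.2 := by
  rcases eq_or_ne (πb p.1 p.2) 0 with h0 | h0
  · rw [h0, zero_mul]
    by_contra hne
    have : 0 < πe p.1 p.2 := lt_of_le_of_ne (hπe0 _ _) (Ne.symm fun h => hne h.symm)
    exact absurd (hsupp _ _ this) (by rw [h0]; exact lt_irrefl 0)
  · field_simp

lemma stepW_ratio (hπe0 : ∀ s a, 0 ≤ πe s a) (hsupp : ∀ s a, 0 < πe s a → 0 < πb s a)
    (τ : ℕ → S × A) (t : ℕ) :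
    stepW d1 T πe τ t = stepW d1 T πb τ t * rho πb πe τ t := by
  cases t with
  | zero =>
    show d1 (τ 0).1 * πe (τ 0).1 (τ 0).2 = d1 (τ 0).1 * πb (τ 0).1 (τ 0).2 * rho πb πe τ 0
    unfold rho
    rw [mul_assoc, pb_mul_rho_fst πb πe hπe0 hsupp (τ 0)]
  | succ t =>
    show T (τ t).1 (τ t).2 (τ (t+1)).1 * πe (τ (t+1)).1 (τ (t+1)).2
        = T (τ t).1 (τ t).2 (τ (t+1)).1 * πb (τ (t+1)).1 (τ (t+1)).2 * rho πb πe τ (t+1)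
    unfold rho
    rw [mul_assoc, pb_mul_rho_fst πb πe hπe0 hsupp (τ (t+1))]

lemma preP_ratio (hπe0 : ∀ s a, 0 ≤ πe s a) (hsupp : ∀ s a, 0 < πe s a → 0 < πb s a)
    (n : ℕ) (τ : ℕ → S × A) :
    preP d1 T πe n τ = preP d1 T πb n τ * ∏ j ∈ range n, rho πb πe τ j := by
  unfold preP
  rw [← Finset.prod_mul_distrib]
  exact Finset.prod_congr rfl fun t _ => stepW_ratio d1 T πb πe hπe0 hsupp τ t

lemma expVal_change (hπe0 : ∀ s a, 0 ≤ πe s a) (hsupp : ∀ s a, 0 < πe s a → 0 < πb s a)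
    (n : ℕ) (f : (ℕ → S × A) → ℝ) :
    expVal d1 T πe n f
      = expVal d1 T πb n (fun τ => (∏ j ∈ range n, rho πb πe τ j) * f τ) := by
  unfold expVal
  refine Finset.sum_congr rfl fun σ _ => ?_
  rw [preP_ratio d1 T πb πe hπe0 hsupp]
  ring

lemma expVal_fiber (n z : ℕ) (f : (ℕ → S × A) → ℝ) :
    expVal d1 T π n f
      = ∑ p : S × A, expVal d1 T π n (fun τ => if τ z = p then f τ else 0) := by
  unfold expVal
  rw [Finset.sum_comm]
  refine Finset.sum_congr rfl fun σ _ => ?_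
  simp only [mul_ite, mul_zero]
  rw [Finset.sum_ite_eq univ (extTraj σ z) (fun _ => preP d1 T π n (extTraj σ) * f (extTraj σ))]
  simp

lemma expVal_ite_const (z : ℕ) (s : S) (a : A) (c : ℝ) :
    expVal d1 T π (z + 1) (fun τ => if τ z = (s, a) then c else 0)
      = c * dSA d1 T π z s a := by
  rw [dSA, ← expVal_const_mul]
  exact expVal_congr d1 T π fun τ => by split_ifs <;> simp

lemma preP_nonneg (hd1 : ∀ s, 0 ≤ d1 s) (hT : ∀ s a s', 0 ≤ T s a s')
    (hπ0 : ∀ s a, 0 ≤ π s a) (n : ℕ) (τ : ℕ → S × A) : 0 ≤ preP d1 T π n τ := by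
  unfold preP
  refine Finset.prod_nonneg fun t _ => ?_
  cases t with
  | zero => exact mul_nonneg (hd1 _) (hπ0 _ _)
  | succ t => exact mul_nonneg (hT _ _ _) (hπ0 _ _)

lemma preP_split {m n : ℕ} (hmn : m ≤ n) (τ : ℕ → S × A) :
    preP d1 T π n τ = preP d1 T π m τ * ∏ j ∈ Ico m n, stepW d1 T π τ j := by
  unfold preP
  rw [Finset.range_eq_Ico, Finset.range_eq_Ico]
  exact (Finset.prod_Ico_consecutive (f := stepW d1 T π τ) (Nat.zero_le m) hmn).symm

/-- Terms of the `dSA` sum vanish when `dSA` is zero. -/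
lemma dSA_terms_zero (hd1 : ∀ s, 0 ≤ d1 s) (hT : ∀ s a s', 0 ≤ T s a s')
    (hπ0 : ∀ s a, 0 ≤ π s a) {z : ℕ} {s : S} {a : A}
    (h0 : dSA d1 T π z s a = 0) (σ : Fin (z + 1) → S × A)
    (hσ : extTraj σ z = (s, a)) : preP d1 T π (z + 1) (extTraj σ) = 0 := by
  have hsum : ∑ σ' : Fin (z+1) → S × A, preP d1 T π (z+1) (extTraj σ')
      * (if extTraj σ' z = (s, a) then (1:ℝ) else 0) = 0 := h0
  have hnn : ∀ σ' ∈ (univ : Finset (Fin (z+1) → S × A)),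
      0 ≤ preP d1 T π (z+1) (extTraj σ') * (if extTraj σ' z = (s, a) then (1:ℝ) else 0) := by
    intro σ' _
    refine mul_nonneg (preP_nonneg d1 T π hd1 hT hπ0 _ _) ?_
    split_ifs <;> norm_num
  have := (Finset.sum_eq_zero_iff_of_nonneg hnn).mp hsum σ (Finset.mem_univ σ)
  rw [hσ, if_pos rfl, mul_one] at this
  exact this

/-- If the time-`z` occupancy of `(s,a)` vanishes, any fiber expectation over it
vanishes (at any horizon `n > z`). -/
lemma expVal_fiber_zero (hd1 : ∀ s, 0 ≤ d1 s) (hT : ∀ s a s', 0 ≤ T s a s')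
    (hπ0 : ∀ s a, 0 ≤ π s a) {z n : ℕ} (hzn : z < n) {s : S} {a : A}
    (h0 : dSA d1 T π z s a = 0) (f : (ℕ → S × A) → ℝ) :
    expVal d1 T π n (fun τ => if τ z = (s, a) then f τ else 0) = 0 := by
  unfold expVal
  refine Finset.sum_eq_zero fun σ _ => ?_
  by_cases hσ : extTraj σ z = (s, a)
  · have hz1n : z + 1 ≤ n := hzn
    rw [preP_split d1 T π hz1n]
    -- the prefix of σ of length z+1
    have hpre : preP d1 T π (z+1) (extTraj σ)
        = preP d1 T π (z+1) (extTraj (fun i : Fin (z+1) => σ (Fin.castLE hz1n i))) := by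
      refine preP_congr d1 T π fun j hj => ?_
      rw [extTraj_lt _ (lt_of_lt_of_le hj hz1n), extTraj_lt _ hj]
      rfl
    have hσ' : extTraj (fun i : Fin (z+1) => σ (Fin.castLE hz1n i)) z = (s, a) := by
      rw [extTraj_lt _ (Nat.lt_succ_self z)]
      rw [extTraj_lt _ (lt_of_lt_of_le (Nat.lt_succ_self z) hz1n)] at hσ
      exact hσ
    rw [hpre, dSA_terms_zero d1 T π hd1 hT hπ0 h0 _ hσ', zero_mul, zero_mul]
  · simp [hσ]

/-- Occupancy absolute continuity: `d_z^{π_b}(s,a) = 0 → d_z^{π_e}(s,a) = 0`. -/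
lemma dSA_abs_cont (hd1 : ∀ s, 0 ≤ d1 s) (hT : ∀ s a s', 0 ≤ T s a s')
    (hπb0 : ∀ s a, 0 ≤ πb s a) (hπe0 : ∀ s a, 0 ≤ πe s a)
    (hsupp : ∀ s a, 0 < πe s a → 0 < πb s a) {z : ℕ} {s : S} {a : A}
    (h0 : dSA d1 T πb z s a = 0) : dSA d1 T πe z s a = 0 := by
  unfold dSA expVal
  refine Finset.sum_eq_zero fun σ _ => ?_
  by_cases hσ : extTraj σ z = (s, a)
  · rw [preP_ratio d1 T πb πe hπe0 hsupp,
      dSA_terms_zero d1 T πb hd1 hT hπb0 h0 σ hσ, zero_mul, zero_mul]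
  · simp [hσ]

lemma cross_identity (hTsum : ∀ s a, ∑ s', T s a s' = 1)
    (hπe0 : ∀ s a, 0 ≤ πe s a) (hsupp : ∀ s a, 0 < πe s a → 0 < πb s a)
    (z : ℕ) (s : S) (a : A) :
    ∀ (k : ℕ) (h : S × A → ℝ),
      dSA d1 T πb z s a *
        expVal d1 T πe (z + k + 1) (fun τ => if τ z = (s, a) then h (τ (z + k)) else 0)
      = dSA d1 T πe z s a *
        expVal d1 T πb (z + k + 1) (fun τ => if τ z = (s, a)
          then (∏ j ∈ Icc (z + 1) (z + k), rho πb πe τ j) * h (τ (z + k)) else 0) := by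
  intro k
  induction k with
  | zero =>
    intro h
    simp only [Nat.add_zero]
    have hem : Icc (z + 1) z = (∅ : Finset ℕ) := Finset.Icc_eq_empty (by omega)
    rw [expVal_congr d1 T πe (g := fun τ => if τ z = (s, a) then h (s, a) else 0)
        (fun τ => by by_cases hc : τ z = (s, a) <;> simp [hc]),
      expVal_ite_const,
      expVal_congr d1 T πb (g := fun τ => if τ z = (s, a) then h (s, a) else 0)
        (fun τ => by by_cases hc : τ z = (s, a) <;> simp [hc, hem]),
      expVal_ite_const]
    ring
  | succ k ih =>
    intro h
    simp only [show z + (k + 1) = z + k + 1 from rfl]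
    have hzn : z < z + k + 1 := by omega
    have hzk : z + k < z + k + 1 := by omega
    set h' : S × A → ℝ :=
      fun q => ∑ p : S × A, T q.1 q.2 p.1 * πe p.1 p.2 * h p with hh'
    have he : expVal d1 T πe (z + k + 1 + 1)
          (fun τ => if τ z = (s, a) then h (τ (z + k + 1)) else 0)
        = expVal d1 T πe (z + k + 1)
          (fun τ => if τ z = (s, a) then h' (τ (z + k)) else 0) := by
      rw [expVal_succ]
      unfold expVal
      refine Finset.sum_congr rfl fun σ _ => ?_
      have hst : ∀ p : S × A, stepW d1 T πe (extTraj (Fin.snoc σ p)) (z + k + 1)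
          = T (extTraj σ (z + k)).1 (extTraj σ (z + k)).2 p.1 * πe p.1 p.2 := by
        intro p
        have h0 : stepW d1 T πe (extTraj (Fin.snoc σ p)) (z + k + 1)
            = T (extTraj (Fin.snoc σ p) (z + k)).1 (extTraj (Fin.snoc σ p) (z + k)).2
                (extTraj (Fin.snoc σ p) (z + k + 1)).1
              * πe (extTraj (Fin.snoc σ p) (z + k + 1)).1
                (extTraj (Fin.snoc σ p) (z + k + 1)).2 := rfl
        rw [h0, extTraj_snoc_lt σ p hzk, extTraj_snoc_last]
      calc ∑ p : S × A, preP d1 T πe (z + k + 1) (extTraj σ)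
              * stepW d1 T πe (extTraj (Fin.snoc σ p)) (z + k + 1)
              * (if extTraj (Fin.snoc σ p) z = (s, a)
                  then h (extTraj (Fin.snoc σ p) (z + k + 1)) else 0)
          = ∑ p : S × A, preP d1 T πe (z + k + 1) (extTraj σ)
              * (if extTraj σ z = (s, a)
                  then T (extTraj σ (z + k)).1 (extTraj σ (z + k)).2 p.1 * πe p.1 p.2 * h p
                  else 0) := by
            refine Finset.sum_congr rfl fun p _ => ?_
            rw [hst p, extTraj_snoc_lt σ p hzn, extTraj_snoc_last]
            split_ifs <;> ring
        _ = preP d1 T πe (z + k + 1) (extTraj σ)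
              * (if extTraj σ z = (s, a) then h' (extTraj σ (z + k)) else 0) := by
            rw [← Finset.mul_sum]
            congr 1
            by_cases hc : extTraj σ z = (s, a)
            · simp [hc, hh']
            · simp [hc]
    have hb : expVal d1 T πb (z + k + 1 + 1)
          (fun τ => if τ z = (s, a)
            then (∏ j ∈ Icc (z + 1) (z + k + 1), rho πb πe τ j) * h (τ (z + k + 1)) else 0)
        = expVal d1 T πb (z + k + 1)
          (fun τ => if τ z = (s, a)
            then (∏ j ∈ Icc (z + 1) (z + k), rho πb πe τ j) * h' (τ (z + k)) else 0) := by
      rw [expVal_succ]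
      unfold expVal
      refine Finset.sum_congr rfl fun σ _ => ?_
      have hst : ∀ p : S × A, stepW d1 T πb (extTraj (Fin.snoc σ p)) (z + k + 1)
          = T (extTraj σ (z + k)).1 (extTraj σ (z + k)).2 p.1 * πb p.1 p.2 := by
        intro p
        have h0 : stepW d1 T πb (extTraj (Fin.snoc σ p)) (z + k + 1)
            = T (extTraj (Fin.snoc σ p) (z + k)).1 (extTraj (Fin.snoc σ p) (z + k)).2
                (extTraj (Fin.snoc σ p) (z + k + 1)).1
              * πb (extTraj (Fin.snoc σ p) (z + k + 1)).1
                (extTraj (Fin.snoc σ p) (z + k + 1)).2 := rfl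
        rw [h0, extTraj_snoc_lt σ p hzk, extTraj_snoc_last]
      have hprod : ∀ p : S × A,
          (∏ j ∈ Icc (z + 1) (z + k + 1), rho πb πe (extTraj (Fin.snoc σ p)) j)
          = (∏ j ∈ Icc (z + 1) (z + k), rho πb πe (extTraj σ) j)
              * (πe p.1 p.2 / πb p.1 p.2) := by
        intro p
        rw [Finset.prod_Icc_succ_top (by omega : z + 1 ≤ z + k + 1)]
        congr 1
        · refine Finset.prod_congr rfl fun j hj => ?_
          have hjk : j < z + k + 1 := by
            have := (Finset.mem_Icc.mp hj).2; omega
          unfold rho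
          rw [extTraj_snoc_lt σ p hjk]
        · unfold rho
          rw [extTraj_snoc_last]
      calc ∑ p : S × A, preP d1 T πb (z + k + 1) (extTraj σ)
              * stepW d1 T πb (extTraj (Fin.snoc σ p)) (z + k + 1)
              * (if extTraj (Fin.snoc σ p) z = (s, a)
                  then (∏ j ∈ Icc (z + 1) (z + k + 1), rho πb πe (extTraj (Fin.snoc σ p)) j)
                    * h (extTraj (Fin.snoc σ p) (z + k + 1)) else 0)
          = ∑ p : S × A, preP d1 T πb (z + k + 1) (extTraj σ)
              * (if extTraj σ z = (s, a)
                  then (∏ j ∈ Icc (z + 1) (z + k), rho πb πe (extTraj σ) j)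
                    * (T (extTraj σ (z + k)).1 (extTraj σ (z + k)).2 p.1
                        * πe p.1 p.2 * h p)
                  else 0) := by
            refine Finset.sum_congr rfl fun p _ => ?_
            rw [hst p, extTraj_snoc_lt σ p hzn, extTraj_snoc_last, hprod p]
            split_ifs with hc
            · have hcancel : πb p.1 p.2 * (πe p.1 p.2 / πb p.1 p.2) = πe p.1 p.2 :=
                pb_mul_rho_fst πb πe hπe0 hsupp p
              calc preP d1 T πb (z + k + 1) (extTraj σ)
                    * (T (extTraj σ (z + k)).1 (extTraj σ (z + k)).2 p.1 * πb p.1 p.2)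
                    * ((∏ j ∈ Icc (z + 1) (z + k), rho πb πe (extTraj σ) j)
                        * (πe p.1 p.2 / πb p.1 p.2) * h p)
                  = preP d1 T πb (z + k + 1) (extTraj σ)
                    * (T (extTraj σ (z + k)).1 (extTraj σ (z + k)).2 p.1
                        * (πb p.1 p.2 * (πe p.1 p.2 / πb p.1 p.2)))
                    * ((∏ j ∈ Icc (z + 1) (z + k), rho πb πe (extTraj σ) j) * h p) := by
                    ring
                _ = _ := by rw [hcancel]; ring
            · ring
        _ = preP d1 T πb (z + k + 1) (extTraj σ)
              * (if extTraj σ z = (s, a)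
                  then (∏ j ∈ Icc (z + 1) (z + k), rho πb πe (extTraj σ) j)
                    * h' (extTraj σ (z + k)) else 0) := by
            rw [← Finset.mul_sum]
            congr 1
            by_cases hc : extTraj σ z = (s, a)
            · simp [hc, hh', Finset.mul_sum]
            · simp [hc]
    rw [he, hb]
    exact ih h'

lemma per_t_low (hTsum : ∀ s a, ∑ s', T s a s' = 1)
    (hπbsum : ∀ s, ∑ a, πb s a = 1) (hπesum : ∀ s, ∑ a, πe s a = 1)
    (hπe0 : ∀ s a, 0 ≤ πe s a) (hsupp : ∀ s a, 0 < πe s a → 0 < πb s a)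
    {t L : ℕ} (htL : t < L) (r : S → A → ℝ) :
    expVal d1 T πe L (fun τ => r (τ t).1 (τ t).2)
      = expVal d1 T πb L
          (fun τ => (∏ j ∈ range (t + 1), rho πb πe τ j) * r (τ t).1 (τ t).2) := by
  rw [expVal_marginal d1 T πe hTsum hπesum (m := t + 1) (by omega) _
      (fun τ τ' hag => by rw [hag t (by omega)]) L (by omega),
    expVal_marginal d1 T πb hTsum hπbsum (by omega : 1 ≤ t + 1) _
      (fun τ τ' hag => by
        have h2 : τ t = τ' t := hag t (by omega)
        have h3 : ∏ j ∈ range (t + 1), rho πb πe τ j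
            = ∏ j ∈ range (t + 1), rho πb πe τ' j :=
          Finset.prod_congr rfl fun j hj => by
            unfold rho; rw [hag j (mem_range.mp hj)]
        rw [h2, h3]) L (by omega)]
  exact expVal_change d1 T πb πe hπe0 hsupp (t + 1) _

lemma per_t_high (hd1 : ∀ s, 0 ≤ d1 s) (hT : ∀ s a s', 0 ≤ T s a s')
    (hTsum : ∀ s a, ∑ s', T s a s' = 1)
    (hπb0 : ∀ s a, 0 ≤ πb s a) (hπbsum : ∀ s, ∑ a, πb s a = 1)
    (hπe0 : ∀ s a, 0 ≤ πe s a) (hπesum : ∀ s, ∑ a, πe s a = 1)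
    (hsupp : ∀ s a, 0 < πe s a → 0 < πb s a)
    {z t L : ℕ} (hzt : z < t) (htL : t < L) (r : S → A → ℝ) :
    expVal d1 T πe L (fun τ => r (τ t).1 (τ t).2)
      = expVal d1 T πb L (fun τ =>
          (dSA d1 T πe z (τ z).1 (τ z).2 / dSA d1 T πb z (τ z).1 (τ z).2) *
          ((∏ j ∈ Icc (z + 1) t, rho πb πe τ j) * r (τ t).1 (τ t).2)) := by
  rw [expVal_marginal d1 T πe hTsum hπesum (m := t + 1) (by omega) _
      (fun τ τ' hag => by rw [hag t (by omega)]) L (by omega),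
    expVal_marginal d1 T πb hTsum hπbsum (by omega : 1 ≤ t + 1) _
      (fun τ τ' hag => by
        have h1 : τ z = τ' z := hag z (by omega)
        have h2 : τ t = τ' t := hag t (by omega)
        have h3 : ∏ j ∈ Icc (z + 1) t, rho πb πe τ j
            = ∏ j ∈ Icc (z + 1) t, rho πb πe τ' j :=
          Finset.prod_congr rfl fun j hj => by
            unfold rho
            rw [hag j (by have := (Finset.mem_Icc.mp hj).2; omega)]
        rw [h1, h2, h3]) L (by omega)]
  rw [expVal_fiber d1 T πe (t + 1) z, expVal_fiber d1 T πb (t + 1) z]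
  refine Finset.sum_congr rfl fun p _ => ?_
  obtain ⟨s, a⟩ := p
  rw [expVal_congr d1 T πe
      (g := fun τ => if τ z = (s, a) then r (τ t).1 (τ t).2 else 0)
      (fun τ => by by_cases hc : τ z = (s, a) <;> simp [hc]),
    expVal_congr d1 T πb
      (g := fun τ => (dSA d1 T πe z s a / dSA d1 T πb z s a) *
        (if τ z = (s, a) then (∏ j ∈ Icc (z + 1) t, rho πb πe τ j)
          * r (τ t).1 (τ t).2 else 0))
      (fun τ => by by_cases hc : τ z = (s, a) <;> simp [hc]),
    expVal_const_mul]
  have hkey := cross_identity d1 T πb πe hTsum hπe0 hsupp z s a (t - z)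
    (fun q => r q.1 q.2)
  rw [show z + (t - z) = t from by omega] at hkey
  by_cases hb0 : dSA d1 T πb z s a = 0
  · have he0 := dSA_abs_cont d1 T πb πe hd1 hT hπb0 hπe0 hsupp hb0
    rw [expVal_fiber_zero d1 T πe hd1 hT hπe0 (show z < t + 1 by omega) he0,
      he0, zero_div, zero_mul]
  · rw [div_mul_eq_mul_div, eq_div_iff hb0]
    linear_combination hkey

end Aux

/-- fixed-switch interpolation identity: for any fixed switching
time `z` (0-indexed; paper time `z+1 ∈ [1, L]`),
`J(π_e) = E_{τ∼p_πb}[Σ_(t≤z) γ^t ρ_(0:t) R_t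
          + Σ_(t>z) γ^t (d_z^πe(S_z,A_z)/d_z^πb(S_z,A_z)) ρ_(z+1:t) R_t]`. -/
theorem fixed_switch_identity
    (d1 : S → ℝ) (T : S → A → S → ℝ) (πb πe : S → A → ℝ) (r : S → A → ℝ)
    (γ : ℝ) (L z : ℕ) (hz : z < L)
    (hd1 : ∀ s, 0 ≤ d1 s) (hd1sum : ∑ s, d1 s = 1)
    (hT : ∀ s a s', 0 ≤ T s a s') (hTsum : ∀ s a, ∑ s', T s a s' = 1)
    (hπb : ∀ s a, 0 ≤ πb s a) (hπbsum : ∀ s, ∑ a, πb s a = 1)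
    (hπe : ∀ s a, 0 ≤ πe s a) (hπesum : ∀ s, ∑ a, πe s a = 1)
    (hγ0 : 0 ≤ γ) (hγ1 : γ < 1)
    (hsupp : ∀ s a, 0 < πe s a → 0 < πb s a) :
    expVal d1 T πe L (fun τ => ∑ t ∈ range L, γ ^ t * r (τ t).1 (τ t).2)
      = expVal d1 T πb L (fun τ =>
          (∑ t ∈ range (z + 1), γ ^ t *
            (∏ j ∈ range (t + 1), rho πb πe τ j) * r (τ t).1 (τ t).2)
          + ∑ t ∈ Ico (z + 1) L, γ ^ t *
              (dSA d1 T πe z (τ z).1 (τ z).2 / dSA d1 T πb z (τ z).1 (τ z).2) *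
              (∏ j ∈ Icc (z + 1) t, rho πb πe τ j) * r (τ t).1 (τ t).2) := by
  rw [expVal_finsum d1 T πe (range L) (fun t τ => γ ^ t * r (τ t).1 (τ t).2),
    expVal_add d1 T πb
      (fun τ => ∑ t ∈ range (z + 1), γ ^ t *
        (∏ j ∈ range (t + 1), rho πb πe τ j) * r (τ t).1 (τ t).2)
      (fun τ => ∑ t ∈ Ico (z + 1) L, γ ^ t *
        (dSA d1 T πe z (τ z).1 (τ z).2 / dSA d1 T πb z (τ z).1 (τ z).2) *
        (∏ j ∈ Icc (z + 1) t, rho πb πe τ j) * r (τ t).1 (τ t).2),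
    expVal_finsum d1 T πb (range (z + 1))
      (fun t τ => γ ^ t * (∏ j ∈ range (t + 1), rho πb πe τ j) * r (τ t).1 (τ t).2),
    expVal_finsum d1 T πb (Ico (z + 1) L)
      (fun t τ => γ ^ t *
        (dSA d1 T πe z (τ z).1 (τ z).2 / dSA d1 T πb z (τ z).1 (τ z).2) *
        (∏ j ∈ Icc (z + 1) t, rho πb πe τ j) * r (τ t).1 (τ t).2)]
  conv_lhs => rw [Finset.range_eq_Ico,
    ← Finset.sum_Ico_consecutive _ (Nat.zero_le (z + 1)) (show z + 1 ≤ L by omega),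
    ← Finset.range_eq_Ico]
  congr 1
  · refine Finset.sum_congr rfl fun t ht => ?_
    have htz : t < z + 1 := Finset.mem_range.mp ht
    rw [expVal_const_mul d1 T πe L (γ ^ t) (fun τ => r (τ t).1 (τ t).2),
      per_t_low d1 T πb πe hTsum hπbsum hπesum hπe hsupp (show t < L by omega) r,
      ← expVal_const_mul]
    exact expVal_congr d1 T πb fun τ => by ring
  · refine Finset.sum_congr rfl fun t ht => ?_
    have htz : z + 1 ≤ t := (Finset.mem_Ico.mp ht).1
    have htL : t < L := (Finset.mem_Ico.mp ht).2
    rw [expVal_const_mul d1 T πe L (γ ^ t) (fun τ => r (τ t).1 (τ t).2),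
      per_t_high d1 T πb πe hd1 hT hTsum hπb hπbsum hπe hπesum hsupp
        (show z < t by omega) htL r,
      ← expVal_const_mul]
    exact expVal_congr d1 T πb fun τ => by ring
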